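/- arXiv:1608.08379 — 5 statements merged into one kernel-verified Lean document; each statement's English description precedes it below -/
import Mathlib

section
/- For every ℓ > 0, the function b_ℓ(s) = 2ℓ(1−s)·min(1, exp(ℓ²(s−1)/2)) is globally Lipschitz continuous on ℝ; it is bounded above, namely b_ℓ(s) ≤ 4/(e·ℓ) for all s ∈ ℝ; and it is not bounded below: for every M > 0 there exists s ∈ ℝ with b_ℓ(s) < −M. -/
/-!
Put `u = ℓ²(1 - s)/2`. On `s ≤ 1` we have `b_ℓ(s) = (4/ℓ) u e^{-u}`, with derivative
`-2ℓ (1 - u) e^{-u}`; on `s ≥ 1`, `b_ℓ` is the line `2ℓ(1 - s)`. Since `|1 - u| ≤ 1 + u ≤ e^u`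
for `u ≥ 0`, both pieces are `2ℓ`-Lipschitz, and `u e^{-u} ≤ e^{-1}` gives the upper bound.
The linear piece is unbounded below.
-/

/-- For ℓ > 0 define b_ℓ(s) := 2ℓ(1−s)·min(1, exp(ℓ²(s−1)/2)). -/
noncomputable def bFun (l s : ℝ) : ℝ := 2 * l * (1 - s) * min 1 (Real.exp (l ^ 2 * (s - 1) / 2))

open Real Set Filter
open scoped NNReal

theorem lipschitzWith_of_lipschitzOnWith_Iic_Ici {E : Type*} [PseudoMetricSpace E]
    {f : ℝ → E} {K : ℝ≥0} {a : ℝ} (h₁ : LipschitzOnWith K f (Iic a))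
    (h₂ : LipschitzOnWith K f (Ici a)) : LipschitzWith K f := by
  refine LipschitzWith.of_dist_le_mul fun s t => ?_
  wlog hst : s ≤ t generalizing s t
  · simpa only [dist_comm] using this t s (le_of_not_ge hst)
  rcases le_total t a with hta | hat
  · exact h₁.dist_le_mul s (mem_Iic.2 (hst.trans hta)) t hta
  rcases le_total a s with has | hsa
  · exact h₂.dist_le_mul s has t (mem_Ici.2 (has.trans hst))
  calc dist (f s) (f t) ≤ dist (f s) (f a) + dist (f a) (f t) := dist_triangle _ _ _
    _ ≤ K * dist s a + K * dist a t :=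
        add_le_add (h₁.dist_le_mul s hsa a (mem_Iic.2 le_rfl))
          (h₂.dist_le_mul a (mem_Ici.2 le_rfl) t hat)
    _ = K * dist s t := by
        simp only [Real.dist_eq, abs_of_nonpos (sub_nonpos.2 hsa),
          abs_of_nonpos (sub_nonpos.2 hat), abs_of_nonpos (sub_nonpos.2 hst)]
        ring

theorem abs_one_sub_mul_exp_neg_le_one {u : ℝ} (hu : 0 ≤ u) : |(1 - u) * exp (-u)| ≤ 1 := by
  have h_one_add : 1 + u ≤ exp u := by linarith [add_one_le_exp u]
  calc |(1 - u) * exp (-u)| = |1 - u| * exp (-u) := by rw [abs_mul, abs_of_pos (exp_pos _)]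
    _ ≤ exp u * exp (-u) := by
        gcongr
        exact (abs_sub_le_iff.2 ⟨by linarith, by linarith⟩).trans h_one_add
    _ = 1 := by rw [← exp_add, add_neg_cancel, exp_zero]

theorem bFun_of_one_le (l : ℝ) {s : ℝ} (hs : 1 ≤ s) : bFun l s = 2 * l * (1 - s) := by
  rw [bFun, min_eq_left (one_le_exp (by have := sq_nonneg l; nlinarith)), mul_one]

theorem bFun_of_le_one (l : ℝ) {s : ℝ} (hs : s ≤ 1) :
    bFun l s = 2 * l * (1 - s) * exp (-(l ^ 2 * (1 - s) / 2)) := by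
  rw [bFun, min_eq_right (exp_le_one_iff.2 (by have := sq_nonneg l; nlinarith))]
  ring_nf

theorem lipschitzOnWith_bFun_Iic (l : ℝ) : LipschitzOnWith (2 * ‖l‖₊) (bFun l) (Iic 1) := by
  set u : ℝ → ℝ := fun s => l ^ 2 * (1 - s) / 2
  have hderiv : ∀ s, HasDerivAt (fun s => 2 * l * (1 - s) * exp (-u s))
      (-(2 * l) * ((1 - u s) * exp (-u s))) s := by
    intro s
    have hu_deriv : HasDerivAt u (-l ^ 2 / 2) s := by
      simpa [u] using (((hasDerivAt_id s).const_sub 1).const_mul (l ^ 2)).div_const 2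
    exact ((((hasDerivAt_id s).const_sub 1).const_mul (2 * l)).mul hu_deriv.neg.exp).congr_deriv
      (by simp only [u, Pi.neg_apply, id]; ring)
  refine (convex_Iic 1).lipschitzOnWith_of_nnnorm_hasDerivWithin_le
    (fun s hs => (hderiv s).hasDerivWithinAt.congr (fun t ht => bFun_of_le_one l ht)
      (bFun_of_le_one l hs)) fun s hs => ?_
  have hu_nonneg : 0 ≤ u s := by have : 0 ≤ 1 - s := sub_nonneg.2 hs; positivity
  rw [← NNReal.coe_le_coe, coe_nnnorm, NNReal.coe_mul, coe_nnnorm, norm_mul, norm_neg, norm_mul]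
  simpa using mul_le_of_le_one_right (by positivity) (abs_one_sub_mul_exp_neg_le_one hu_nonneg)

theorem lipschitzOnWith_bFun_Ici (l : ℝ) : LipschitzOnWith (2 * ‖l‖₊) (bFun l) (Ici 1) := by
  refine (lipschitzOnWith_iff_dist_le_mul).2 fun s hs t ht => ?_
  rw [bFun_of_one_le l hs, bFun_of_one_le l ht, Real.dist_eq, Real.dist_eq, NNReal.coe_mul,
    NNReal.coe_ofNat, coe_nnnorm, Real.norm_eq_abs,
    show 2 * l * (1 - s) - 2 * l * (1 - t) = -(2 * l) * (s - t) by ring, abs_mul, abs_neg, abs_mul,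
    abs_two]

theorem lipschitzWith_bFun (l : ℝ) : LipschitzWith (2 * ‖l‖₊) (bFun l) :=
  lipschitzWith_of_lipschitzOnWith_Iic_Ici (lipschitzOnWith_bFun_Iic l) (lipschitzOnWith_bFun_Ici l)

theorem bFun_le {l : ℝ} (hl : 0 < l) (s : ℝ) : bFun l s ≤ 4 / (exp 1 * l) := by
  rcases le_total s 1 with hs | hs
  · set u := l ^ 2 * (1 - s) / 2
    have hb : bFun l s = 4 / l * (u * exp (-u)) := by
      rw [bFun_of_le_one l hs]
      field_simp
      ring
    calc bFun l s ≤ 4 / l * exp (-1) := by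
          rw [hb]; gcongr; exact mul_exp_neg_le_exp_neg_one u
      _ = 4 / (exp 1 * l) := by rw [exp_neg]; field_simp
  · rw [bFun_of_one_le l hs]
    have : 2 * l * (1 - s) ≤ 0 := mul_nonpos_of_nonneg_of_nonpos (by positivity) (by linarith)
    exact this.trans (by positivity)

theorem tendsto_bFun_atTop {l : ℝ} (hl : 0 < l) : Tendsto (bFun l) atTop atBot := by
  have hline : Tendsto (fun s => 2 * l * (1 - s)) atTop atBot :=
    (tendsto_atBot_add_const_left _ 1 tendsto_neg_atTop_atBot).const_mul_atBot (by positivity)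
  exact hline.congr' ((eventually_ge_atTop 1).mono fun s hs => (bFun_of_one_le l hs).symm)

/-- For every ℓ > 0, b_ℓ is globally Lipschitz continuous on ℝ; it is bounded above by
4/(e·ℓ); and it is not bounded below. -/
theorem bFun_lipschitz_boundedAbove_not_boundedBelow (l : ℝ) (hl : 0 < l) :
    (∃ C : ℝ, 0 ≤ C ∧ ∀ s t : ℝ, |bFun l s - bFun l t| ≤ C * |s - t|) ∧
    (∀ s : ℝ, bFun l s ≤ 4 / (Real.exp 1 * l)) ∧
    (∀ M : ℝ, 0 < M → ∃ s : ℝ, bFun l s < -M) := by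
  refine ⟨⟨(2 * ‖l‖₊ : ℝ≥0), NNReal.coe_nonneg _, fun s t => ?_⟩, bFun_le hl,
    fun M _ => ?_⟩
  · simpa only [Real.dist_eq] using (lipschitzWith_bFun l).dist_le_mul s t
  · exact ((tendsto_bFun_atTop hl).eventually_lt_atBot (-M)).exists
end

section
/- Let ℓ > 0, S₀ ≥ 0, and let S : ℝ → ℝ satisfy S(0) = S₀ and be differentiable at every t ≥ 0 with S'(t) = b_ℓ(S(t)) for all t ≥ 0. Then for every t ≥ 0 one has min(S₀, 1) ≤ S(t) ≤ max(S₀, 1). -/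
open Set

theorem le_max_of_hasDerivAt_nonpos_above {u u' : ℝ → ℝ} {a c : ℝ}
    (hu : ∀ t, a ≤ t → HasDerivAt u (u' t) t) (hu' : ∀ t, a ≤ t → c < u t → u' t ≤ 0)
    {t : ℝ} (ht : a ≤ t) : u t ≤ max (u a) c := by
  refine le_of_forall_pos_le_add fun δ hδ => ?_
  set M := max (u a) c
  set ε := δ / (t - a + 1)
  have hε : 0 < ε := div_pos hδ (by linarith)
  have barrier : ∀ s ∈ Icc a t, u s ≤ M + ε * (s - a + 1) := by
    refine image_le_of_deriv_right_lt_deriv_boundary' (f' := u') (B' := fun _ => ε)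
      (fun s hs => (hu s hs.1).continuousAt.continuousWithinAt)
      (fun s hs => (hu s hs.1).hasDerivWithinAt) ?_ (by fun_prop) ?_ ?_
    · linarith [le_max_left (u a) c]
    · intro s _
      simpa using ((((hasDerivAt_id s).sub_const a).add_const 1).const_mul ε).const_add M
        |>.hasDerivWithinAt
    · intro s hs hus
      have hcs : c < u s := by
        rw [hus]
        nlinarith [le_max_right (u a) c, hs.1]
      exact (hu' s hs.1 hcs).trans_lt hε
  simpa [ε, div_mul_cancel₀ δ (by linarith : t - a + 1 ≠ 0)] using barrier t ⟨ht, le_rfl⟩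

theorem bFun_nonneg_of_le_one {l s : ℝ} (hl : 0 ≤ l) (hs : s ≤ 1) : 0 ≤ bFun l s :=
  mul_nonneg (mul_nonneg (by positivity) (by linarith)) (by positivity)

theorem bFun_nonpos_of_one_le {l s : ℝ} (hl : 0 ≤ l) (hs : 1 ≤ s) : bFun l s ≤ 0 :=
  mul_nonpos_of_nonpos_of_nonneg (mul_nonpos_of_nonneg_of_nonpos (by positivity) (by linarith))
    (by positivity)

theorem ode_solution_bounds_general (l S₀ : ℝ) (hl : 0 < l)
    (S : ℝ → ℝ) (hS0 : S 0 = S₀)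
    (hS : ∀ t : ℝ, 0 ≤ t → HasDerivAt S (bFun l (S t)) t) :
    ∀ t : ℝ, 0 ≤ t → min S₀ 1 ≤ S t ∧ S t ≤ max S₀ 1 := by
  intro t ht
  constructor
  · have h := le_max_of_hasDerivAt_nonpos_above (u := fun r => -S r) (c := -1)
      (fun s hs => (hS s hs).neg)
      (fun s _ hs => neg_nonpos.mpr (bFun_nonneg_of_le_one hl.le (by linarith))) ht
    simp only [hS0, max_neg_neg] at h
    linarith
  · simpa [hS0] using le_max_of_hasDerivAt_nonpos_above hS
      (fun s _ hs => bFun_nonpos_of_one_le hl.le hs.le) ht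

/-- Any solution of S' = b_ℓ(S) on [0,∞) with S(0) = S₀ ≥ 0 satisfies
min(S₀,1) ≤ S(t) ≤ max(S₀,1) for every t ≥ 0. -/
theorem ode_solution_bounds (l S₀ : ℝ) (hl : 0 < l) (hS₀ : 0 ≤ S₀)
    (S : ℝ → ℝ) (hS0 : S 0 = S₀)
    (hS : ∀ t : ℝ, 0 ≤ t → HasDerivAt S (bFun l (S t)) t) :
    ∀ t : ℝ, 0 ≤ t → min S₀ 1 ≤ S t ∧ S t ≤ max S₀ 1 :=
  ode_solution_bounds_general l S₀ hl S hS0 hS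
end

section
/- Let ℓ > 0, S₀ ≥ 0, and let S : ℝ → ℝ satisfy S(0) = S₀ and be differentiable at every t ≥ 0 with S'(t) = b_ℓ(S(t)) for all t ≥ 0. Then S(t) → 1 as t → ∞. -/
open Real Filter Topology

theorem le_mul_exp_of_hasDerivAt_le_neg_mul {f f' : ℝ → ℝ} {a c t : ℝ}
    (hf : ∀ x, a ≤ x → HasDerivAt f (f' x) x) (bound : ∀ x, a ≤ x → f' x ≤ -c * f x)
    (ht : a ≤ t) : f t ≤ f a * exp (-c * (t - a)) := by
  have key := le_gronwallBound_of_liminf_deriv_right_le (f' := f') (K := -c) (ε := 0)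
    (fun x hx => (hf x hx.1).continuousAt.continuousWithinAt)
    (fun x hx _ hr => (hf x hx.1).hasDerivWithinAt.liminf_right_slope_le hr)
    le_rfl (fun x hx => by simpa using bound x hx.1) t ⟨ht, le_rfl⟩
  rwa [gronwallBound_ε0] at key

noncomputable def bRate (l s : ℝ) : ℝ := 2 * l * min 1 (exp (l ^ 2 * (s - 1) / 2))

theorem bFun_eq_bRate_mul (l s : ℝ) : bFun l s = bRate l s * (1 - s) := by
  rw [bFun, bRate]
  ring

theorem bRate_nonneg {l : ℝ} (hl : 0 ≤ l) (s : ℝ) : 0 ≤ bRate l s := by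
  have : 0 ≤ min 1 (exp (l ^ 2 * (s - 1) / 2)) := le_min zero_le_one (exp_pos _).le
  unfold bRate
  positivity

theorem mul_exp_neg_le_bRate {l s M : ℝ} (hl : 0 ≤ l) (hs : |s - 1| ≤ M) :
    2 * l * exp (-(l ^ 2 * M / 2)) ≤ bRate l s := by
  have hM : 0 ≤ M := (abs_nonneg _).trans hs
  refine mul_le_mul_of_nonneg_left (le_min ?_ (exp_le_exp.2 ?_)) (by positivity)
  · exact exp_le_one_iff.2 (neg_nonpos.2 (by positivity))
  · nlinarith [neg_abs_le (s - 1), sq_nonneg l]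

theorem hasDerivAt_sub_one_sq_of_bFun {l t : ℝ} {S : ℝ → ℝ}
    (h : HasDerivAt S (bFun l (S t)) t) :
    HasDerivAt (fun t => (S t - 1) ^ 2) (-(2 * bRate l (S t)) * (S t - 1) ^ 2) t := by
  refine ((h.sub_const 1).pow 2).congr_deriv ?_
  rw [bFun_eq_bRate_mul]
  ring

section Solution

variable {l : ℝ} {S : ℝ → ℝ}

theorem sub_one_sq_le_of_bFun (hl : 0 ≤ l) (hS : ∀ t, 0 ≤ t → HasDerivAt S (bFun l (S t)) t)
    {t : ℝ} (ht : 0 ≤ t) : (S t - 1) ^ 2 ≤ (S 0 - 1) ^ 2 := by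
  simpa using le_mul_exp_of_hasDerivAt_le_neg_mul (c := 0)
    (fun x hx => hasDerivAt_sub_one_sq_of_bFun (hS x hx))
    (fun x _ => by nlinarith [bRate_nonneg hl (S x), sq_nonneg (S x - 1)]) ht

theorem sub_one_sq_le_mul_exp_of_bFun (hl : 0 ≤ l)
    (hS : ∀ t, 0 ≤ t → HasDerivAt S (bFun l (S t)) t) {t : ℝ} (ht : 0 ≤ t) :
    (S t - 1) ^ 2 ≤ (S 0 - 1) ^ 2 * exp (-(4 * l * exp (-(l ^ 2 * |S 0 - 1| / 2))) * t) := by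
  simpa using le_mul_exp_of_hasDerivAt_le_neg_mul
    (fun x hx => hasDerivAt_sub_one_sq_of_bFun (hS x hx)) (fun x hx => by
      have := mul_exp_neg_le_bRate hl (sq_le_sq.1 (sub_one_sq_le_of_bFun hl hS hx))
      nlinarith [sq_nonneg (S x - 1)]) ht

end Solution

theorem ode_solution_tendsto_one_general (l : ℝ) (hl : 0 < l)
    (S : ℝ → ℝ)
    (hS : ∀ t : ℝ, 0 ≤ t → HasDerivAt S (bFun l (S t)) t) :
    Filter.Tendsto S Filter.atTop (nhds 1) := by
  set k := 4 * l * exp (-(l ^ 2 * |S 0 - 1| / 2))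
  have hk : 0 < k := by positivity
  have hdecay : Tendsto (fun t => (S 0 - 1) ^ 2 * exp (-k * t)) atTop (𝓝 0) := by
    simpa using (tendsto_exp_neg_atTop_nhds_zero.comp
      (tendsto_id.const_mul_atTop hk)).const_mul ((S 0 - 1) ^ 2)
  have hsq : Tendsto (fun t => (S t - 1) ^ 2) atTop (𝓝 0) :=
    squeeze_zero' (Eventually.of_forall fun t => sq_nonneg _)
      ((eventually_ge_atTop 0).mono fun t ht => sub_one_sq_le_mul_exp_of_bFun hl.le hS ht) hdecay
  have habs := (continuous_sqrt.tendsto 0).comp hsq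
  simp only [Function.comp_def, sqrt_sq_eq_abs, sqrt_zero] at habs
  exact tendsto_sub_nhds_zero_iff.1 ((tendsto_zero_iff_abs_tendsto_zero _).2 habs)

/-- Any solution of S' = b_ℓ(S) on [0,∞) with S(0) = S₀ ≥ 0 converges to 1 as t → ∞. -/
theorem ode_solution_tendsto_one (l S₀ : ℝ) (hl : 0 < l) (hS₀ : 0 ≤ S₀)
    (S : ℝ → ℝ) (hS0 : S 0 = S₀)
    (hS : ∀ t : ℝ, 0 ≤ t → HasDerivAt S (bFun l (S t)) t) :
    Filter.Tendsto S Filter.atTop (nhds 1) :=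
  ode_solution_tendsto_one_general l hl S hS
end

section
/- Let ℓ > 0, S₀ ≥ 0, and let S : ℝ → ℝ satisfy S(0) = S₀ and be differentiable at every t ≥ 0 with S'(t) = b_ℓ(S(t)) for all t ≥ 0. Then S(t) > 0 for every t > 0. -/
/-!
Since `b_ℓ(s) > 0` for `s < 1`, the solution has positive derivative wherever it lies below `1`.
If `S t ≤ 0` for some `t > 0`, then some point of `(0, t]` where `S < 1` minimises `S` on
`[0, t]` (if the minimum is attained at `0`, then `S t ≤ S₀ = S 0` makes `t` a minimiser too),
yet `S' > 0` there, so `S` is smaller just to its left.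
-/

open Set

lemma bFun_pos {l s : ℝ} (hl : 0 < l) (hs : s < 1) : 0 < bFun l s := by
  have h1s : 0 < 1 - s := sub_pos.2 hs
  exact mul_pos (by positivity) (lt_min one_pos (Real.exp_pos _))

lemma IsMinOn.hasDerivWithinAt_nonpos_of_mem_Ioc {f : ℝ → ℝ} {f' a b u : ℝ}
    (hmin : IsMinOn f (Icc a b) u) (hu : u ∈ Ioc a b) (hf : HasDerivWithinAt f f' (Icc a b) u) :
    f' ≤ 0 := by
  have hcone : a - u ∈ posTangentConeAt (Icc a b) u :=
    sub_mem_posTangentConeAt_of_segment_subset <|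
      (convex_Icc a b).segment_subset (Ioc_subset_Icc_self hu)
        (left_mem_Icc.2 (hu.1.le.trans hu.2))
  have h := hmin.localize.hasFDerivWithinAt_nonneg hf.hasFDerivWithinAt hcone
  simp only [ContinuousLinearMap.toSpanSingleton_apply, smul_eq_mul] at h
  nlinarith [hu.1]

theorem lt_of_hasDerivAt_pos_of_lt {f f' : ℝ → ℝ} {a b c : ℝ} (hab : a < b)
    (hcont : ContinuousOn f (Icc a b)) (hf : ∀ x ∈ Ioc a b, HasDerivAt f (f' x) x)
    (hpos : ∀ x ∈ Ioc a b, f x < c → 0 < f' x) (hb : f b < c) : f a < f b := by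
  have not_min : ∀ v ∈ Ioc a b, f v < c → ¬IsMinOn f (Icc a b) v := fun v hv hvc hmin =>
    (hpos v hv hvc).not_ge (hmin.hasDerivWithinAt_nonpos_of_mem_Ioc hv (hf v hv).hasDerivWithinAt)
  obtain ⟨u, hu, hmin⟩ := isCompact_Icc.exists_isMinOn (nonempty_Icc.2 hab.le) hcont
  by_contra! hba
  rcases hu.1.eq_or_lt with rfl | hau
  · exact not_min b ⟨hab, le_rfl⟩ hb fun x hx => hba.trans (hmin hx)
  · exact not_min u ⟨hau, hu.2⟩ ((hmin (right_mem_Icc.2 hab.le)).trans_lt hb) hmin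

/-- Any solution of S' = b_ℓ(S) on [0,∞) with S(0) = S₀ ≥ 0 is strictly positive
for every t > 0. -/
theorem ode_solution_pos (l S₀ : ℝ) (hl : 0 < l) (hS₀ : 0 ≤ S₀)
    (S : ℝ → ℝ) (hS0 : S 0 = S₀)
    (hS : ∀ t : ℝ, 0 ≤ t → HasDerivAt S (bFun l (S t)) t) :
    ∀ t : ℝ, 0 < t → 0 < S t := by
  intro t ht
  by_contra! hSt
  have hcont : ContinuousOn S (Icc 0 t) := fun x hx => (hS x hx.1).continuousAt.continuousWithinAt
  have hlt : S 0 < S t := lt_of_hasDerivAt_pos_of_lt ht hcont (fun x hx => hS x hx.1.le)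
    (fun _ _ hx => bFun_pos hl hx) (hSt.trans_lt one_pos)
  linarith
end

section
/- Fix a real number q ≥ 1/2, reals ℓ > 0, s ≥ 0, K ≥ 0 and τ ≥ 0. There exists a constant C > 0, depending only on q, ℓ, s, K and τ, with the following property. For every natural number N ≥ 1, every λ : {1,…,N} → [0,∞) with ∑_{j=1}^N j^{2s} λ_j² ≤ τ, and every x, G ∈ ℝ^N with ∑_{j=1}^N j^{2s} G_j² ≤ K², setting δ := ℓ·N^{−1/2} and, for ξ ∈ ℝ^N, y(ξ)_j := x_j − δ(x_j + G_j) + √(2δ)·λ_j·ξ_j, one has ∫ ( ∑_{j=1}^N j^{2s} (y(ξ)_j − x_j)² )^q dμ_N(ξ) ≤ C · N^{−q/2} · ( 1 + ( ∑_{j=1}^N j^{2s} x_j² )^q ), where μ_N is the N-fold product of the standard Gaussian measure N(0,1) on ℝ. -/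
/-!
The increment is `-δ (x + G) + √(2δ) λ ξ`, so termwise `(u + v)² ≤ 2u² + 2v²` bounds its squared
norm by `4δ (δ (‖x‖² + ‖G‖²) + Z)`, where `Z = ∑ j^{2s} λ_j² ξ_j²` is a weighted chi-square
variable with total weight at most `τ`. Since `δ ≤ ℓ`, all the decay sits in the factor
`δ^q = ℓ^q N^{-q/2}`. The remaining expectation satisfies `E (a + Z)^q ≤ 2^q (a^q + 1 + E Z^{n+1})`
with `n = ⌊q⌋`, and Jensen's inequality for the weights `j^{2s} λ_j²` gives
`E Z^{n+1} ≤ τ^{n+1} E ξ^{2(n+1)}`, a Gaussian moment independent of `N`.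
-/

open MeasureTheory ProbabilityTheory Real Finset

lemma add_rpow_le_two_rpow_mul_add_rpow {a b q : ℝ} (ha : 0 ≤ a) (hb : 0 ≤ b) (hq : 0 ≤ q) :
    (a + b) ^ q ≤ 2 ^ q * (a ^ q + b ^ q) :=
  calc (a + b) ^ q ≤ (2 * max a b) ^ q := by gcongr; linarith [le_max_left a b, le_max_right a b]
    _ = 2 ^ q * max a b ^ q := mul_rpow zero_le_two (le_max_of_le_left ha)
    _ ≤ 2 ^ q * (a ^ q + b ^ q) := by
        gcongr
        rcases max_choice a b with h | h <;> rw [h]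
        · linarith [rpow_nonneg hb q]
        · linarith [rpow_nonneg ha q]

lemma rpow_le_one_add_pow {z q : ℝ} {n : ℕ} (hz : 0 ≤ z) (hq : 0 ≤ q) (hqn : q ≤ n) :
    z ^ q ≤ 1 + z ^ n := by
  rcases le_total z 1 with h | h
  · linarith [rpow_le_one hz h hq, pow_nonneg hz n]
  · linarith [rpow_natCast z n ▸ rpow_le_rpow_of_exponent_le h hqn]

lemma sum_mul_pow_succ_le {ι : Type*} (s : Finset ι) {w f : ι → ℝ} (hw : ∀ i, 0 ≤ w i)
    (hf : ∀ i, 0 ≤ f i) (n : ℕ) :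
    (∑ i ∈ s, w i * f i) ^ (n + 1) ≤ (∑ i ∈ s, w i) ^ n * ∑ i ∈ s, w i * f i ^ (n + 1) := by
  have hp : (1 : ℝ) ≤ (n + 1 : ℕ) := by norm_cast; omega
  have holder := inner_le_weight_mul_Lp_of_nonneg s hp w f hw hf
  have hW : 0 ≤ ∑ i ∈ s, w i := sum_nonneg fun i _ => hw i
  have hT : 0 ≤ ∑ i ∈ s, w i * f i ^ ((n + 1 : ℕ) : ℝ) :=
    sum_nonneg fun i _ => mul_nonneg (hw i) (rpow_nonneg (hf i) _)
  calc (∑ i ∈ s, w i * f i) ^ (n + 1)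
      ≤ ((∑ i ∈ s, w i) ^ (1 - ((n + 1 : ℕ) : ℝ)⁻¹) *
          (∑ i ∈ s, w i * f i ^ ((n + 1 : ℕ) : ℝ)) ^ ((n + 1 : ℕ) : ℝ)⁻¹) ^ (n + 1) :=
        pow_le_pow_left₀ (sum_nonneg fun i _ => mul_nonneg (hw i) (hf i)) holder _
    _ = (∑ i ∈ s, w i) ^ n * ∑ i ∈ s, w i * f i ^ (n + 1) := by
        have hexp : (1 - ((n + 1 : ℕ) : ℝ)⁻¹) * ((n + 1 : ℕ) : ℝ) = n := by
          push_cast; field_simp; ring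
        rw [mul_pow, ← rpow_natCast, ← rpow_natCast _ (n + 1), ← rpow_mul hW, ← rpow_mul hT,
          inv_mul_cancel₀ (by positivity), rpow_one, hexp]
        simp only [rpow_natCast]

lemma integrable_pow_gaussianReal (m : ℝ) (v : NNReal) (k : ℕ) :
    Integrable (fun t : ℝ => t ^ k) (gaussianReal m v) :=
  (memLp_id_gaussianReal (k : NNReal)).integrable_norm_pow'.mono' (by fun_prop)
    (.of_forall fun t => by simp [norm_pow])

section IIDProduct

variable {ι : Type*} [Fintype ι] {μ : Measure ℝ} [IsProbabilityMeasure μ] {k : ℕ}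

lemma integrable_sum_mul_pow_pi (hμ : Integrable (fun t : ℝ => t ^ k) μ) (w : ι → ℝ) :
    Integrable (fun ξ : ι → ℝ => ∑ j, w j * ξ j ^ k) (Measure.pi fun _ => μ) :=
  integrable_finsetSum _ fun j _ => (integrable_comp_eval (i := j) hμ).const_mul (w j)

lemma integral_sum_mul_pow_pi (hμ : Integrable (fun t : ℝ => t ^ k) μ) (w : ι → ℝ) :
    ∫ ξ : ι → ℝ, ∑ j, w j * ξ j ^ k ∂(Measure.pi fun _ => μ) = (∑ j, w j) * ∫ t, t ^ k ∂μ := by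
  rw [integral_finsetSum _ fun j _ => (integrable_comp_eval (i := j) hμ).const_mul (w j),
    sum_mul]
  refine sum_congr rfl fun j _ => ?_
  rw [integral_const_mul]
  exact congrArg _ (integral_comp_eval hμ.aestronglyMeasurable)

variable {a q : ℝ} {n : ℕ} {w : ι → ℝ}

lemma rpow_add_sum_mul_sq_le (ha : 0 ≤ a) (hq : 0 ≤ q) (hqn : q ≤ n + 1) (hw : ∀ j, 0 ≤ w j)
    (ξ : ι → ℝ) :
    (a + ∑ j, w j * ξ j ^ 2) ^ q ≤
      2 ^ q * (a ^ q + 1 + (∑ j, w j) ^ n * ∑ j, w j * ξ j ^ (2 * (n + 1))) := by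
  have hZ : 0 ≤ ∑ j, w j * ξ j ^ 2 := sum_nonneg fun j _ => mul_nonneg (hw j) (sq_nonneg _)
  have jensen := sum_mul_pow_succ_le univ hw (fun j => sq_nonneg (ξ j)) n
  simp only [← pow_mul] at jensen
  calc (a + ∑ j, w j * ξ j ^ 2) ^ q ≤ 2 ^ q * (a ^ q + (∑ j, w j * ξ j ^ 2) ^ q) :=
        add_rpow_le_two_rpow_mul_add_rpow ha hZ hq
    _ ≤ 2 ^ q * (a ^ q + (1 + (∑ j, w j * ξ j ^ 2) ^ (n + 1))) := by
        gcongr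
        exact rpow_le_one_add_pow hZ hq (by exact_mod_cast hqn)
    _ ≤ _ := by
        rw [← add_assoc]
        gcongr

lemma integrable_rpow_add_sum_mul_sq (hμ : Integrable (fun t : ℝ => t ^ (2 * (n + 1))) μ)
    (ha : 0 ≤ a) (hq : 0 ≤ q) (hqn : q ≤ n + 1) (hw : ∀ j, 0 ≤ w j) :
    Integrable (fun ξ : ι → ℝ => (a + ∑ j, w j * ξ j ^ 2) ^ q) (Measure.pi fun _ => μ) := by
  refine Integrable.mono' (g := fun ξ => 2 ^ q * (a ^ q + 1 + (∑ j, w j) ^ n *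
      ∑ j, w j * ξ j ^ (2 * (n + 1))))
    (((integrable_const _).add ((integrable_sum_mul_pow_pi hμ w).const_mul _)).const_mul _)
    (Measurable.aestronglyMeasurable (by fun_prop)) ?_
  refine .of_forall fun ξ => ?_
  rw [norm_of_nonneg (rpow_nonneg (add_nonneg ha (sum_nonneg fun j _ =>
    mul_nonneg (hw j) (sq_nonneg _))) q)]
  exact rpow_add_sum_mul_sq_le ha hq hqn hw ξ

lemma integral_rpow_add_sum_mul_sq_le (hμ : Integrable (fun t : ℝ => t ^ (2 * (n + 1))) μ)
    (ha : 0 ≤ a) (hq : 0 ≤ q) (hqn : q ≤ n + 1) (hw : ∀ j, 0 ≤ w j) :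
    ∫ ξ : ι → ℝ, (a + ∑ j, w j * ξ j ^ 2) ^ q ∂(Measure.pi fun _ => μ) ≤
      2 ^ q * (a ^ q + 1 + (∑ j, w j) ^ (n + 1) * ∫ t, t ^ (2 * (n + 1)) ∂μ) := by
  calc _ ≤ ∫ ξ : ι → ℝ, 2 ^ q * (a ^ q + 1 + (∑ j, w j) ^ n * ∑ j, w j * ξ j ^ (2 * (n + 1)))
          ∂(Measure.pi fun _ => μ) :=
        integral_mono (integrable_rpow_add_sum_mul_sq hμ ha hq hqn hw)
          (((integrable_const _).add ((integrable_sum_mul_pow_pi hμ w).const_mul _)).const_mul _)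
          (rpow_add_sum_mul_sq_le ha hq hqn hw)
    _ = _ := by
        rw [integral_const_mul, integral_add (integrable_const _)
          ((integrable_sum_mul_pow_pi hμ w).const_mul _), integral_const, integral_const_mul,
          integral_sum_mul_pow_pi hμ]
        simp only [probReal_univ, one_smul]
        ring

end IIDProduct

lemma sum_mul_jump_sq_le {ι : Type*} (s : Finset ι) {δ : ℝ} (hδ : 0 ≤ δ) {c : ι → ℝ}
    (hc : ∀ j, 0 ≤ c j) (x G lam ξ : ι → ℝ) :
    ∑ j ∈ s, c j * ((x j - δ * (x j + G j) + √(2 * δ) * lam j * ξ j) - x j) ^ 2 ≤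
      4 * δ * (δ * (∑ j ∈ s, c j * x j ^ 2 + ∑ j ∈ s, c j * G j ^ 2) +
        ∑ j ∈ s, c j * lam j ^ 2 * ξ j ^ 2) := by
  have hsq : √(2 * δ) ^ 2 = 2 * δ := sq_sqrt (by positivity)
  have term : ∀ j ∈ s, c j * ((x j - δ * (x j + G j) + √(2 * δ) * lam j * ξ j) - x j) ^ 2 ≤
      4 * δ * (δ * (c j * x j ^ 2 + c j * G j ^ 2) + c j * lam j ^ 2 * ξ j ^ 2) := by
    intro j _
    have h1 : ((x j - δ * (x j + G j) + √(2 * δ) * lam j * ξ j) - x j) ^ 2 ≤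
        2 * (δ * (x j + G j)) ^ 2 + 2 * (√(2 * δ) * lam j * ξ j) ^ 2 := by
      nlinarith [sq_nonneg (δ * (x j + G j) + √(2 * δ) * lam j * ξ j)]
    have h2 : (x j + G j) ^ 2 ≤ 2 * (x j ^ 2 + G j ^ 2) := by nlinarith [sq_nonneg (x j - G j)]
    calc _ ≤ c j * (2 * (δ * (x j + G j)) ^ 2 + 2 * (√(2 * δ) * lam j * ξ j) ^ 2) :=
          mul_le_mul_of_nonneg_left h1 (hc j)
      _ = 2 * δ ^ 2 * (c j * (x j + G j) ^ 2) + 4 * δ * (c j * lam j ^ 2 * ξ j ^ 2) := by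
          simp only [mul_pow, hsq]; ring
      _ ≤ 2 * δ ^ 2 * (c j * (2 * (x j ^ 2 + G j ^ 2))) +
            4 * δ * (c j * lam j ^ 2 * ξ j ^ 2) := by
          gcongr; exact hc j
      _ = _ := by ring
  refine (sum_le_sum term).trans_eq ?_
  simp only [mul_add, mul_sum, sum_add_distrib]

lemma div_sqrt_rpow {l N : ℝ} (hl : 0 ≤ l) (hN : 0 ≤ N) (q : ℝ) :
    (l / √N) ^ q = l ^ q * N ^ (-(q / 2)) := by
  rw [div_rpow hl (sqrt_nonneg N), sqrt_eq_rpow, ← rpow_mul hN, rpow_neg hN, div_eq_mul_inv]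
  ring_nf

lemma integral_rpow_sum_mul_jump_sq_le {ι : Type*} [Fintype ι] {q δ : ℝ} {n : ℕ} (hq : 0 ≤ q)
    (hqn : q ≤ n + 1) (hδ : 0 ≤ δ) {c : ι → ℝ} (hc : ∀ j, 0 ≤ c j) (x G lam : ι → ℝ) :
    ∫ ξ : ι → ℝ, (∑ j, c j * ((x j - δ * (x j + G j) + √(2 * δ) * lam j * ξ j) - x j) ^ 2) ^ q
        ∂(Measure.pi fun _ => gaussianReal 0 1) ≤
      (4 * δ) ^ q * (2 ^ q * ((δ * (∑ j, c j * x j ^ 2 + ∑ j, c j * G j ^ 2)) ^ q + 1 +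
        (∑ j, c j * lam j ^ 2) ^ (n + 1) * ∫ t, t ^ (2 * (n + 1)) ∂gaussianReal 0 1)) := by
  have hμ := integrable_pow_gaussianReal 0 1 (2 * (n + 1))
  have hw : ∀ j, 0 ≤ c j * lam j ^ 2 := fun j => mul_nonneg (hc j) (sq_nonneg _)
  have ha : 0 ≤ δ * (∑ j, c j * x j ^ 2 + ∑ j, c j * G j ^ 2) := mul_nonneg hδ (add_nonneg
    (sum_nonneg fun j _ => mul_nonneg (hc j) (sq_nonneg _))
    (sum_nonneg fun j _ => mul_nonneg (hc j) (sq_nonneg _)))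
  calc _ ≤ ∫ ξ : ι → ℝ, (4 * δ) ^ q * (δ * (∑ j, c j * x j ^ 2 + ∑ j, c j * G j ^ 2) +
          ∑ j, c j * lam j ^ 2 * ξ j ^ 2) ^ q ∂(Measure.pi fun _ => gaussianReal 0 1) := by
        have hS : ∀ ξ : ι → ℝ,
            0 ≤ ∑ j, c j * ((x j - δ * (x j + G j) + √(2 * δ) * lam j * ξ j) - x j) ^ 2 :=
          fun ξ => sum_nonneg fun j _ => mul_nonneg (hc j) (sq_nonneg _)
        refine integral_mono_of_nonneg (.of_forall fun ξ => rpow_nonneg (hS ξ) q)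
          ((integrable_rpow_add_sum_mul_sq hμ ha hq hqn hw).const_mul _) (.of_forall fun ξ => ?_)
        dsimp only
        rw [← mul_rpow (by positivity) (add_nonneg ha (sum_nonneg fun j _ =>
          mul_nonneg (hw j) (sq_nonneg _)))]
        exact rpow_le_rpow (hS ξ) (sum_mul_jump_sq_le _ hδ hc x G lam ξ) hq
    _ ≤ _ := by
        rw [integral_const_mul]
        gcongr
        exact integral_rpow_add_sum_mul_sq_le hμ ha hq hqn hw

lemma mul_add_le_add_mul_one_add {α β z : ℝ} (hα : 0 ≤ α) (hβ : 0 ≤ β) (hz : 0 ≤ z) :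
    α * z + β ≤ (α + β) * (1 + z) := by
  nlinarith [mul_nonneg hβ hz]

lemma integral_rpow_sum_mul_jump_sq_le_of_le {ι : Type*} [Fintype ι] {q δ l K τ : ℝ} {n : ℕ}
    (hq : 0 ≤ q) (hqn : q ≤ n + 1) (hδ : 0 ≤ δ) (hδl : δ ≤ l) {c : ι → ℝ} (hc : ∀ j, 0 ≤ c j)
    {x G lam : ι → ℝ} (hG : ∑ j, c j * G j ^ 2 ≤ K ^ 2) (hlam : ∑ j, c j * lam j ^ 2 ≤ τ) :
    ∫ ξ : ι → ℝ, (∑ j, c j * ((x j - δ * (x j + G j) + √(2 * δ) * lam j * ξ j) - x j) ^ 2) ^ q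
        ∂(Measure.pi fun _ => gaussianReal 0 1) ≤
      8 ^ q * δ ^ q * (2 ^ q * l ^ q * (1 + (K ^ 2) ^ q) + 1 +
        τ ^ (n + 1) * ∫ t, t ^ (2 * (n + 1)) ∂gaussianReal 0 1) *
        (1 + (∑ j, c j * x j ^ 2) ^ q) := by
  set X := ∑ j, c j * x j ^ 2
  set M := ∫ t, t ^ (2 * (n + 1)) ∂gaussianReal 0 1
  have hX : 0 ≤ X := sum_nonneg fun j _ => mul_nonneg (hc j) (sq_nonneg _)
  have hM : 0 ≤ M := integral_nonneg fun t => (even_two_mul _).pow_nonneg t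
  have hl : 0 ≤ l := hδ.trans hδl
  have hY : 0 ≤ ∑ j, c j * G j ^ 2 := sum_nonneg fun j _ => mul_nonneg (hc j) (sq_nonneg _)
  have hW : 0 ≤ ∑ j, c j * lam j ^ 2 := sum_nonneg fun j _ => mul_nonneg (hc j) (sq_nonneg _)
  have hτ : 0 ≤ τ := hW.trans hlam
  have hshift : (δ * (X + ∑ j, c j * G j ^ 2)) ^ q ≤ 2 ^ q * l ^ q * (X ^ q + (K ^ 2) ^ q) :=
    calc (δ * (X + ∑ j, c j * G j ^ 2)) ^ q ≤ (l * (X + K ^ 2)) ^ q := by gcongr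
      _ ≤ l ^ q * (2 ^ q * (X ^ q + (K ^ 2) ^ q)) := by
        rw [mul_rpow hl (by positivity)]
        exact mul_le_mul_of_nonneg_left (add_rpow_le_two_rpow_mul_add_rpow hX (sq_nonneg K) hq)
          (rpow_nonneg hl q)
      _ = _ := by ring
  calc _ ≤ _ := integral_rpow_sum_mul_jump_sq_le hq hqn hδ hc x G lam
    _ ≤ (4 * δ) ^ q *
          (2 ^ q * (2 ^ q * l ^ q * (X ^ q + (K ^ 2) ^ q) + 1 + τ ^ (n + 1) * M)) := by
        gcongr
    _ = 8 ^ q * δ ^ q *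
          (2 ^ q * l ^ q * X ^ q + (2 ^ q * l ^ q * (K ^ 2) ^ q + 1 + τ ^ (n + 1) * M)) := by
        rw [mul_rpow zero_le_four hδ, show (8 : ℝ) = 4 * 2 by norm_num,
          mul_rpow zero_le_four zero_le_two]
        ring
    _ ≤ 8 ^ q * δ ^ q * ((2 ^ q * l ^ q + (2 ^ q * l ^ q * (K ^ 2) ^ q + 1 + τ ^ (n + 1) * M)) *
          (1 + X ^ q)) := by
        gcongr
        have hlq := rpow_nonneg hl q
        have hKq := rpow_nonneg (sq_nonneg K) q
        exact mul_add_le_add_mul_one_add (by positivity) (by positivity) (rpow_nonneg hX q)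
    _ = _ := by ring

theorem mala_jump_size_sobolev_general (q l s K τ : ℝ) (hq : 1 / 2 ≤ q) (hl : 0 < l)
    (hτ : 0 ≤ τ) :
    ∃ C : ℝ, 0 < C ∧
      ∀ (N : ℕ), 1 ≤ N →
      ∀ lam x G : Fin N → ℝ,
        (∀ j, 0 ≤ lam j) →
        (∑ j : Fin N, ((j.1 : ℝ) + 1) ^ (2 * s) * lam j ^ 2) ≤ τ →
        (∑ j : Fin N, ((j.1 : ℝ) + 1) ^ (2 * s) * G j ^ 2) ≤ K ^ 2 →
        (∫ ξ : Fin N → ℝ,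
            (∑ j : Fin N, ((j.1 : ℝ) + 1) ^ (2 * s) *
              ((x j - (l / Real.sqrt N) * (x j + G j)
                  + Real.sqrt (2 * (l / Real.sqrt N)) * lam j * ξ j) - x j) ^ 2) ^ q
            ∂(Measure.pi fun _ : Fin N => gaussianReal 0 1)) ≤
          C * (N : ℝ) ^ (-(q / 2)) *
            (1 + (∑ j : Fin N, ((j.1 : ℝ) + 1) ^ (2 * s) * x j ^ 2) ^ q) := by
  have hq0 : 0 ≤ q := by linarith
  have hM : 0 ≤ ∫ t, t ^ (2 * (⌊q⌋₊ + 1)) ∂gaussianReal 0 1 :=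
    integral_nonneg fun t => (even_two_mul _).pow_nonneg t
  refine ⟨8 ^ q * l ^ q * (2 ^ q * l ^ q * (1 + (K ^ 2) ^ q) + 1 +
    τ ^ (⌊q⌋₊ + 1) * ∫ t, t ^ (2 * (⌊q⌋₊ + 1)) ∂gaussianReal 0 1), by positivity,
    fun N hN lam x G _ hlam hG => ?_⟩
  have hδl : l / √N ≤ l := div_le_self hl.le (one_le_sqrt.mpr (by exact_mod_cast hN))
  calc _ ≤ _ := integral_rpow_sum_mul_jump_sq_le_of_le hq0 (Nat.lt_floor_add_one q).le
        (by positivity) hδl (fun j => by positivity) hG hlam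
    _ = _ := by rw [div_sqrt_rpow hl.le N.cast_nonneg]; ring

/-- One-step jump-size estimate in the Sobolev-like norm for the MALA proposal
y = x − δ(x + G) + √(2δ) λ ξ with δ = ℓ/√N:
E‖y − x‖_s^{2q} ≤ C N^{−q/2} (1 + ‖x‖_s^{2q}), uniformly over N, λ, x, G with
∑ j^{2s} λ_j² ≤ τ and ‖G‖_s ≤ K. -/
theorem mala_jump_size_sobolev (q l s K τ : ℝ) (hq : 1 / 2 ≤ q) (hl : 0 < l)
    (hs : 0 ≤ s) (hK : 0 ≤ K) (hτ : 0 ≤ τ) :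
    ∃ C : ℝ, 0 < C ∧
      ∀ (N : ℕ), 1 ≤ N →
      ∀ lam x G : Fin N → ℝ,
        (∀ j, 0 ≤ lam j) →
        (∑ j : Fin N, ((j.1 : ℝ) + 1) ^ (2 * s) * lam j ^ 2) ≤ τ →
        (∑ j : Fin N, ((j.1 : ℝ) + 1) ^ (2 * s) * G j ^ 2) ≤ K ^ 2 →
        (∫ ξ : Fin N → ℝ,
            (∑ j : Fin N, ((j.1 : ℝ) + 1) ^ (2 * s) *
              ((x j - (l / Real.sqrt N) * (x j + G j)
                  + Real.sqrt (2 * (l / Real.sqrt N)) * lam j * ξ j) - x j) ^ 2) ^ q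
            ∂(Measure.pi fun _ : Fin N => gaussianReal 0 1)) ≤
          C * (N : ℝ) ^ (-(q / 2)) *
            (1 + (∑ j : Fin N, ((j.1 : ℝ) + 1) ^ (2 * s) * x j ^ 2) ^ q) :=
  mala_jump_size_sobolev_general q l s K τ hq hl hτ
end
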